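/- The commutator [\bar{x_{i_1}⋯x_{i_m}}, \bar{x_{j_1}⋯x_{j_n}}] (with [a,b] = a∘b − b∘a) of any two skew-right-commutative elements of Zin(X) (m, n ≥ 2) is a linear combination of skew-right-commutative elements, i.e., it lies in the linear span of the elements \bar{w} over words w of length ≥ 2. -/

import Mathlib

/-- Nonempty words in the alphabet `X`. -/
def Word (X : Type) : Type := {l : List X // l ≠ []}

/-- The underlying vector space of the free Zinbiel algebra on `X` over `K`:
the space with basis the nonempty words in `X`. -/
abbrev Zin (K X : Type) [Field K] : Type := Word X →₀ K

/-- All shuffles (interleavings) of two words. -/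
def shuffles {X : Type} : List X → List X → List (List X)
  | [], l => [l]
  | a :: as, [] => [a :: as]
  | a :: as, b :: bs =>
      ((shuffles as (b :: bs)).map fun w => a :: w) ++
        ((shuffles (a :: as) bs).map fun w => b :: w)
  termination_by l₁ l₂ => l₁.length + l₂.length

/-- The basis vector of `Zin K X` corresponding to a word (`0` for the empty word). -/
noncomputable def ofList {K X : Type} [Field K] : List X → Zin K X
  | [] => 0
  | a :: t => Finsupp.single ⟨a :: t, by simp⟩ 1

/-- Sum of the basis vectors of a list of words. -/
noncomputable def ofLists {K X : Type} [Field K] (ls : List (List X)) : Zin K X :=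
  (ls.map (ofList (K := K))).sum

/-- The letter `x` as an element of `Zin K X`. -/
noncomputable def ofLetter {K X : Type} [Field K] (x : X) : Zin K X :=
  Finsupp.single ⟨[x], by simp⟩ 1

/-- The Zinbiel product on `Zin K X`, defined on basis words by
`u ∘ (v ++ [y]) = (u ⧢ v) ++ [y]` and extended bilinearly. -/
noncomputable def zmul {K X : Type} [Field K] (f g : Zin K X) : Zin K X :=
  f.sum fun u cu => g.sum fun w cw =>
    (cu * cw) • ofLists ((shuffles u.1 w.1.dropLast).map fun s => s ++ [w.1.getLast w.2])

/-- The shuffle product on `Zin K X`, extended bilinearly from words. -/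
noncomputable def shMul {K X : Type} [Field K] (f g : Zin K X) : Zin K X :=
  f.sum fun u cu => g.sum fun w cw => (cu * cw) • ofLists (shuffles u.1 w.1)

/-- The commutator `[f,g] = f∘g - g∘f` in `Zin K X`. -/
noncomputable def zbracket {K X : Type} [Field K] (f g : Zin K X) : Zin K X :=
  zmul f g - zmul g f

/-- The anticommutator `{f,g} = f∘g + g∘f` in `Zin K X`. -/
noncomputable def jprod {K X : Type} [Field K] (f g : Zin K X) : Zin K X :=
  zmul f g + zmul g f

/-- Swap the last two letters of a word (identity on shorter words). -/
def swapLast {X : Type} (l : List X) : List X :=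
  match l.reverse with
  | z :: y :: t => (y :: z :: t).reverse
  | _ => l

/-- The linear map `p : Zin(X) → Zin(X)`: `p(x) = -x` on letters, and `p` swaps
the last two letters of a word of length ≥ 2. -/
noncomputable def pMap {K X : Type} [Field K] (f : Zin K X) : Zin K X :=
  f.sum fun w c =>
    c • (if w.1.length = 1 then -(Finsupp.single w (1 : K)) else ofList (swapLast w.1))

/-- `bar f = f - p(f)`. -/
noncomputable def bar {K X : Type} [Field K] (f : Zin K X) : Zin K X := f - pMap f

/-- The skew element `\bar{w} = w - p(w)` associated to a word `w`. -/
noncomputable def skew {K X : Type} [Field K] (w : Word X) : Zin K X :=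
  bar (Finsupp.single w 1)

/-- Membership in `ST(X)`, the subalgebra of `(Zin(X), [·,·])` generated by the
letters: the free special Tortkara algebra on `X`. -/
inductive InST {K X : Type} [Field K] : Zin K X → Prop
  | letter (x : X) : InST (ofLetter x)
  | zero : InST 0
  | add {f g : Zin K X} : InST f → InST g → InST (f + g)
  | smul (c : K) {f : Zin K X} : InST f → InST (c • f)
  | bracket {f g : Zin K X} : InST f → InST g → InST (zbracket f g)

/-- Membership in `J(X)`, the subalgebra of `(Zin(X), {·,·})` generated by the
letters: the Jordan elements of `Zin(X)`. -/
inductive InJ {K X : Type} [Field K] : Zin K X → Prop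
  | letter (x : X) : InJ (ofLetter x)
  | zero : InJ 0
  | add {f g : Zin K X} : InJ f → InJ g → InJ (f + g)
  | smul (c : K) {f : Zin K X} : InJ f → InJ (c • f)
  | jmul {f g : Zin K X} : InJ f → InJ g → InJ (jprod f g)

/-- The left-normed anticommutator `{{⋯{x₁,x₂}⋯},xₙ}` of the letters of a word. -/
noncomputable def dynkinWord {K X : Type} [Field K] : List X → Zin K X
  | [] => 0
  | x :: xs => xs.foldl (fun acc y => jprod acc (ofLetter y)) (ofLetter x)

/-- The Dynkin map `D : Zin(X) → Zin(X)`. -/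
noncomputable def dynkin {K X : Type} [Field K] (f : Zin K X) : Zin K X :=
  f.sum fun w c => c • dynkinWord w.1


section Aux

variable {K X : Type} [Field K]

lemma ofList_eq_single (l : List X) (h : l ≠ []) :
    ofList (K := K) l = Finsupp.single ⟨l, h⟩ 1 := by
  cases l with
  | nil => exact absurd rfl h
  | cons a t => rfl

noncomputable def pvec (w : Word X) : Zin K X :=
  if w.1.length = 1 then -(Finsupp.single w (1 : K)) else ofList (swapLast w.1)

noncomputable def pLin : Zin K X →ₗ[K] Zin K X := Finsupp.linearCombination K pvec

lemma pMap_eq (f : Zin K X) : pMap f = pLin f := rfl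

noncomputable def appLin (y : X) : Zin K X →ₗ[K] Zin K X :=
  Finsupp.linearCombination K (fun w => ofList (w.1 ++ [y]))

noncomputable def preLin (z : X) : Zin K X →ₗ[K] Zin K X :=
  Finsupp.linearCombination K (fun w => ofList (z :: w.1))

lemma pLin_single (w : Word X) (c : K) :
    pLin (Finsupp.single w c) = c • pvec w :=
  Finsupp.linearCombination_single _ _ _

lemma appLin_single (y : X) (w : Word X) (c : K) :
    appLin y (Finsupp.single w c) = c • ofList (w.1 ++ [y]) :=
  Finsupp.linearCombination_single _ _ _

lemma preLin_single (z : X) (w : Word X) (c : K) :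
    preLin z (Finsupp.single w c) = c • ofList (z :: w.1) :=
  Finsupp.linearCombination_single _ _ _

lemma appLin_ofList (l : List X) (h : l ≠ []) (y : X) :
    appLin (K := K) y (ofList l) = ofList (l ++ [y]) := by
  erw [ofList_eq_single l h, appLin_single, one_smul]

lemma preLin_ofList (l : List X) (h : l ≠ []) (z : X) :
    preLin (K := K) z (ofList l) = ofList (z :: l) := by
  erw [ofList_eq_single l h, preLin_single, one_smul]

lemma preLin_appLin (z y : X) (f : Zin K X) :
    preLin z (appLin y f) = appLin y (preLin z f) := by
  induction f using Finsupp.induction_linear with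
  | zero => simp
  | add f g hf hg => simp [map_add, hf, hg]
  | single w c =>
    rw [appLin_single, preLin_single, map_smul, map_smul,
      preLin_ofList _ (by simp), appLin_ofList _ (by simp)]
    simp

end Aux

section Aux2

variable {K X : Type} [Field K]

lemma swapLast_concat (l : List X) (e g : X) :
    swapLast (l ++ [e] ++ [g]) = l ++ [g] ++ [e] := by
  have h : (l ++ [e] ++ [g]).reverse = g :: e :: l.reverse := by simp
  unfold swapLast
  rw [h]
  simp

lemma ofLists_nil : ofLists (K := K) ([] : List (List X)) = 0 := rfl

lemma ofLists_cons (l : List X) (L : List (List X)) :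
    ofLists (K := K) (l :: L) = ofList l + ofLists L := by
  simp [ofLists]

lemma ofLists_append (L₁ L₂ : List (List X)) :
    ofLists (K := K) (L₁ ++ L₂) = ofLists L₁ + ofLists L₂ := by
  simp [ofLists]

lemma ofLists_perm {L₁ L₂ : List (List X)} (h : L₁.Perm L₂) :
    ofLists (K := K) L₁ = ofLists L₂ :=
  (h.map _).sum_eq

lemma ofLists_map_concat (y : X) :
    ∀ (L : List (List X)), (∀ w ∈ L, w ≠ []) →
      ofLists (K := K) (L.map (· ++ [y])) = appLin y (ofLists L)
  | [], _ => by simp [ofLists]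
  | l :: L, h => by
    rw [List.map_cons, ofLists_cons, ofLists_cons, map_add,
      appLin_ofList l (h l (by simp)) y,
      ofLists_map_concat y L (fun w hw => h w (by simp [hw]))]

lemma ofLists_map_cons (z : X) :
    ∀ (L : List (List X)), (∀ w ∈ L, w ≠ []) →
      ofLists (K := K) (L.map (z :: ·)) = preLin z (ofLists L)
  | [], _ => by simp [ofLists]
  | l :: L, h => by
    rw [List.map_cons, ofLists_cons, ofLists_cons, map_add,
      preLin_ofList l (h l (by simp)) z,
      ofLists_map_cons z L (fun w hw => h w (by simp [hw]))]

end Aux2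

section Shuf

variable {X : Type}

theorem shuffles_length : ∀ (a b w : List X), w ∈ shuffles a b → w.length = a.length + b.length
  | [], l, w, hw => by
    simp only [shuffles, List.mem_singleton] at hw; simp [hw]
  | a :: as, [], w, hw => by
    simp only [shuffles, List.mem_singleton] at hw; simp [hw]
  | a :: as, b :: bs, w, hw => by
    rw [shuffles] at hw
    simp only [List.mem_append, List.mem_map] at hw
    rcases hw with ⟨w', hw', rfl⟩ | ⟨w', hw', rfl⟩
    · have := shuffles_length as (b :: bs) w' hw'
      simp [this]; omega
    · have := shuffles_length (a :: as) bs w' hw'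
      simp [this]; omega
  termination_by a b _ _ => a.length + b.length

lemma shuffles_nn (a b : List X) (hab : a ≠ [] ∨ b ≠ []) :
    ∀ w ∈ shuffles a b, w ≠ [] := by
  intro w hw hc
  have hl := shuffles_length a b w hw
  rw [hc] at hl
  simp only [List.length_nil] at hl
  rcases hab with h | h
  · exact h (List.length_eq_zero_iff.mp (by omega))
  · exact h (List.length_eq_zero_iff.mp (by omega))

lemma shuffles_nil_right (l : List X) (h : l ≠ []) : shuffles l [] = [l] := by
  cases l with
  | nil => exact absurd rfl h
  | cons a as => rw [shuffles]

theorem shuffles_comm : ∀ (a b : List X), (shuffles a b).Perm (shuffles b a)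
  | [], [] => by simp [shuffles]
  | [], b :: bs => by rw [shuffles, shuffles]
  | a :: as, [] => by rw [shuffles, shuffles]
  | a :: as, b :: bs => by
    rw [shuffles, shuffles]
    exact (((shuffles_comm as (b :: bs)).map _).append
      ((shuffles_comm (a :: as) bs).map _)).trans List.perm_append_comm
  termination_by a b => a.length + b.length

end Shuf

section SlConcat

variable {K : Type} [Field K]

theorem Sl_concat {X : Type} : ∀ (a b : List X) (x y : X),
    ofLists (K := K) (shuffles (a ++ [x]) (b ++ [y]))
      = appLin y (ofLists (shuffles (a ++ [x]) b))
        + appLin x (ofLists (shuffles a (b ++ [y])))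
  | [], [], x, y => by
    simp only [List.nil_append]
    simp only [shuffles]
    simp only [List.map_cons, List.map_nil, ofLists_append, ofLists_cons, ofLists_nil, add_zero]
    rw [appLin_ofList [x] (by simp) y, appLin_ofList [y] (by simp) x]
    simp only [List.cons_append, List.nil_append]
  | [], b :: bs, x, y => by
    simp only [List.nil_append, List.cons_append]
    have IH := Sl_concat ([] : List X) bs x y
    simp only [List.nil_append, shuffles, ofLists_cons, ofLists_nil, add_zero] at IH
    simp only [shuffles]
    simp only [List.map_cons, List.map_nil, ofLists_append, ofLists_cons, ofLists_nil, add_zero]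
    rw [ofLists_map_cons b _ (shuffles_nn [x] (bs ++ [y]) (Or.inl (by simp))),
      ofLists_map_cons b _ (shuffles_nn [x] bs (Or.inl (by simp))),
      IH, map_add, preLin_appLin, map_add,
      preLin_appLin, preLin_ofList _ (by simp),
      appLin_ofList (x :: b :: bs) (by simp) y]
    simp only [List.cons_append]
    abel
  | a :: as, [], x, y => by
    simp only [List.nil_append, List.cons_append]
    have IH := Sl_concat as ([] : List X) x y
    simp only [List.nil_append] at IH
    rw [shuffles_nil_right (as ++ [x]) (by simp)] at IH
    simp only [ofLists_cons, ofLists_nil, add_zero] at IH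
    simp only [shuffles]
    simp only [List.map_cons, List.map_nil, ofLists_append, ofLists_cons, ofLists_nil, add_zero]
    rw [ofLists_map_cons a _ (shuffles_nn (as ++ [x]) [y] (Or.inl (by simp))),
      ofLists_map_cons a _ (shuffles_nn as [y] (Or.inr (by simp))),
      IH, map_add, preLin_appLin, preLin_appLin, preLin_ofList _ (by simp),
      map_add, appLin_ofList (y :: a :: as) (by simp) x]
    simp only [List.cons_append]
    abel
  | a :: as, b :: bs, x, y => by
    simp only [List.cons_append]
    have IH1 := Sl_concat as (b :: bs) x y
    have IH2 := Sl_concat (a :: as) bs x y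
    simp only [List.cons_append] at IH1 IH2
    simp only [shuffles]
    simp only [List.map_cons, List.map_nil, ofLists_append, ofLists_cons, ofLists_nil, add_zero]
    rw [ofLists_map_cons a _ (shuffles_nn (as ++ [x]) (b :: (bs ++ [y])) (Or.inr (by simp))),
      ofLists_map_cons b _ (shuffles_nn (a :: (as ++ [x])) (bs ++ [y]) (Or.inl (by simp))),
      ofLists_map_cons a _ (shuffles_nn (as ++ [x]) (b :: bs) (Or.inr (by simp))),
      ofLists_map_cons b _ (shuffles_nn (a :: (as ++ [x])) bs (Or.inl (by simp))),
      ofLists_map_cons a _ (shuffles_nn as (b :: (bs ++ [y])) (Or.inr (by simp))),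
      ofLists_map_cons b _ (shuffles_nn (a :: as) (bs ++ [y]) (Or.inl (by simp))),
      IH1, IH2, map_add, map_add, map_add, map_add,
      preLin_appLin, preLin_appLin, preLin_appLin, preLin_appLin]
    abel
  termination_by a b _ _ => a.length + b.length

end SlConcat

section Aux3

variable {K X : Type} [Field K]

lemma zmul_single_single (u v : Word X) (cu cv : K) :
    zmul (Finsupp.single u cu) (Finsupp.single v cv)
      = (cu * cv) • ofLists ((shuffles u.1 v.1.dropLast).map fun s => s ++ [v.1.getLast v.2]) := by
  unfold zmul
  rw [Finsupp.sum_single_index (by simp), Finsupp.sum_single_index (by simp)]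

lemma zmul_sub_left (f g h : Zin K X) : zmul (f - g) h = zmul f h - zmul g h := by
  unfold zmul
  apply Finsupp.sum_sub_index
  intro u b₁ b₂
  rw [← Finsupp.sum_sub]
  exact Finsupp.sum_congr fun w _ => by rw [sub_mul, sub_smul]

lemma zmul_sub_right (f g h : Zin K X) : zmul f (g - h) = zmul f g - zmul f h := by
  unfold zmul
  rw [← Finsupp.sum_sub]
  refine Finsupp.sum_congr fun u _ => ?_
  apply Finsupp.sum_sub_index
  intro w b₁ b₂
  rw [mul_sub, sub_smul]

lemma zmul_sub_sub (f f' g g' : Zin K X) :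
    zmul (f - f') (g - g') = (zmul f g - zmul f g') - (zmul f' g - zmul f' g') := by
  rw [zmul_sub_left, zmul_sub_right, zmul_sub_right]

lemma hZ (p : List X) (hp : p ≠ []) (q : List X) (e : X) :
    zmul (ofList (K := K) p) (ofList (q ++ [e]))
      = appLin e (ofLists (shuffles p q)) := by
  rw [ofList_eq_single p hp, ofList_eq_single (q ++ [e]) (by simp)]
  erw [zmul_single_single]
  simp only [one_mul, one_smul]
  have h1 : (q ++ [e]).dropLast = q := by simp
  have h2 : ∀ (hh : q ++ [e] ≠ []), (q ++ [e]).getLast hh = e := fun hh => by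
    simp [List.getLast_append]
  simp only [h1, h2]
  exact ofLists_map_concat e _ (shuffles_nn p q (Or.inl hp))

lemma skew_concat (s : List X) (a b : X) (h : s ++ [a] ++ [b] ≠ []) :
    skew (K := K) ⟨s ++ [a] ++ [b], h⟩
      = ofList (s ++ [a] ++ [b]) - ofList (s ++ [b] ++ [a]) := by
  unfold skew bar
  erw [pMap_eq, pLin_single, one_smul]
  unfold pvec
  rw [if_neg (by simp), swapLast_concat, ofList_eq_single _ h]

lemma exists_concat2 (l : List X) (h : 2 ≤ l.length) :
    ∃ (s : List X) (a b : X), l = s ++ [a] ++ [b] := by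
  induction l using List.reverseRecOn with
  | nil => simp at h
  | append_singleton s b _ =>
    cases s using List.reverseRecOn with
    | nil => simp at h
    | append_singleton s' a _ => exact ⟨s', a, b, rfl⟩

end Aux3

section Core

variable {K X : Type} [Field K]

noncomputable def barLin : Zin K X →ₗ[K] Zin K X := LinearMap.id - pLin

lemma barLin_apply (f : Zin K X) : barLin f = f - pLin f := by
  simp [barLin, LinearMap.sub_apply]

lemma pLin_app_app (e g : X) (f : Zin K X) :
    pLin (appLin g (appLin e f)) = appLin e (appLin g f) := by
  induction f using Finsupp.induction_linear with
  | zero => simp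
  | add f h hf hh => simp only [map_add, hf, hh]
  | single w cc =>
    rw [appLin_single, map_smul, appLin_ofList _ (by simp) g, map_smul,
      ofList_eq_single (w.1 ++ [e] ++ [g]) (by simp)]
    erw [pLin_single]
    rw [appLin_single, map_smul, appLin_ofList _ (by simp) e]
    congr 1
    rw [one_smul]
    unfold pvec
    rw [if_neg (by simp only [List.length_append, List.length_cons, List.length_nil]; omega),
      swapLast_concat]

lemma mem_bar (e g : X) (F : Zin K X) :
    barLin (appLin g (appLin e F)) ∈
      Submodule.span K {f : Zin K X | ∃ w : Word X, 2 ≤ w.1.length ∧ f = skew w} := by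
  induction F using Finsupp.induction_linear with
  | zero => simp
  | add f h hf hh =>
    rw [map_add (appLin e), map_add (appLin g), map_add]
    exact Submodule.add_mem _ hf hh
  | single w cc =>
    rw [appLin_single, map_smul, appLin_ofList _ (by simp) g, map_smul]
    refine Submodule.smul_mem _ _ ?_
    have hL : w.1 ++ [e] ++ [g] ≠ [] := by simp
    have hsk : barLin (ofList (K := K) (w.1 ++ [e] ++ [g]))
        = skew ⟨w.1 ++ [e] ++ [g], hL⟩ := by
      rw [barLin_apply]
      unfold skew bar
      rw [pMap_eq, ofList_eq_single _ hL]
    rw [hsk]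
    exact Submodule.subset_span ⟨⟨_, hL⟩,
      by simp only [List.length_append, List.length_cons, List.length_nil]; omega, rfl⟩

set_option maxHeartbeats 1000000 in
lemma core [CharZero K] (a b c d : X) (P Q R T A B C D : Zin K X) :
    ((appLin d (appLin c P) + appLin d (appLin b A))
        - (appLin c (appLin d P) + appLin c (appLin b B))
      - ((appLin d (appLin c Q) + appLin d (appLin a C))
        - (appLin c (appLin d Q) + appLin c (appLin a D))))
    - ((appLin b (appLin a R) + appLin b (appLin d A))
        - (appLin a (appLin b R) + appLin a (appLin d C))
      - ((appLin b (appLin a T) + appLin b (appLin c B))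
        - (appLin a (appLin b T) + appLin a (appLin c D))))
    ∈ Submodule.span K {f : Zin K X | ∃ w : Word X, 2 ≤ w.1.length ∧ f = skew w} := by
  set E := ((appLin d (appLin c P) + appLin d (appLin b A))
        - (appLin c (appLin d P) + appLin c (appLin b B))
      - ((appLin d (appLin c Q) + appLin d (appLin a C))
        - (appLin c (appLin d Q) + appLin c (appLin a D))))
    - ((appLin b (appLin a R) + appLin b (appLin d A))
        - (appLin a (appLin b R) + appLin a (appLin d C))
      - ((appLin b (appLin a T) + appLin b (appLin c B))
        - (appLin a (appLin b T) + appLin a (appLin c D)))) with hE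
  have hp : pLin E = -E := by
    rw [hE]
    simp only [map_add, map_sub, pLin_app_app]
    abel
  have h2 : E = (2 : K)⁻¹ • (barLin E) := by
    rw [barLin_apply, hp, sub_neg_eq_add, ← two_smul K,
      smul_smul, inv_mul_cancel₀ (two_ne_zero), one_smul]
  rw [h2]
  refine Submodule.smul_mem _ _ ?_
  rw [hE]
  simp only [map_add, map_sub]
  refine Submodule.sub_mem _
    (Submodule.sub_mem _
      (Submodule.sub_mem _ (Submodule.add_mem _ ?_ ?_) (Submodule.add_mem _ ?_ ?_))
      (Submodule.sub_mem _ (Submodule.add_mem _ ?_ ?_) (Submodule.add_mem _ ?_ ?_)))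
    (Submodule.sub_mem _
      (Submodule.sub_mem _ (Submodule.add_mem _ ?_ ?_) (Submodule.add_mem _ ?_ ?_))
      (Submodule.sub_mem _ (Submodule.add_mem _ ?_ ?_) (Submodule.add_mem _ ?_ ?_)))
  all_goals exact mem_bar _ _ _

end Core

/-- The commutator of two skew-right-commutative elements is a linear combination of
skew-right-commutative elements. -/
theorem bracket_skew_skew_mem_span (K X : Type) [Field K] [CharZero K]
    (w₁ w₂ : Word X) (h₁ : 2 ≤ w₁.1.length) (h₂ : 2 ≤ w₂.1.length) :
    zbracket (skew (K := K) w₁) (skew w₂) ∈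
      Submodule.span K {f : Zin K X | ∃ w : Word X, 2 ≤ w.1.length ∧ f = skew w} := by
  obtain ⟨l₁, hl₁⟩ := w₁
  obtain ⟨l₂, hl₂⟩ := w₂
  obtain ⟨s, a, b, rfl⟩ := exists_concat2 l₁ h₁
  obtain ⟨t, c, d, rfl⟩ := exists_concat2 l₂ h₂
  rw [skew_concat s a b hl₁, skew_concat t c d hl₂]
  unfold zbracket
  rw [zmul_sub_sub, zmul_sub_sub,
    hZ (s ++ [a] ++ [b]) (by simp) (t ++ [c]) d,
    hZ (s ++ [a] ++ [b]) (by simp) (t ++ [d]) c,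
    hZ (s ++ [b] ++ [a]) (by simp) (t ++ [c]) d,
    hZ (s ++ [b] ++ [a]) (by simp) (t ++ [d]) c,
    hZ (t ++ [c] ++ [d]) (by simp) (s ++ [a]) b,
    hZ (t ++ [c] ++ [d]) (by simp) (s ++ [b]) a,
    hZ (t ++ [d] ++ [c]) (by simp) (s ++ [a]) b,
    hZ (t ++ [d] ++ [c]) (by simp) (s ++ [b]) a,
    Sl_concat (s ++ [a]) t b c, Sl_concat (s ++ [a]) t b d,
    Sl_concat (s ++ [b]) t a c, Sl_concat (s ++ [b]) t a d,
    Sl_concat (t ++ [c]) s d a, Sl_concat (t ++ [c]) s d b,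
    Sl_concat (t ++ [d]) s c a, Sl_concat (t ++ [d]) s c b]
  simp only [map_add]
  rw [ofLists_perm (shuffles_comm (t ++ [c]) (s ++ [a])),
    ofLists_perm (shuffles_comm (t ++ [c]) (s ++ [b])),
    ofLists_perm (shuffles_comm (t ++ [d]) (s ++ [a])),
    ofLists_perm (shuffles_comm (t ++ [d]) (s ++ [b]))]
  exact core a b c d _ _ _ _ _ _ _ _
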